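/- The phase function S(x₀,x₁,x₂) := S₀(cosh(a₁−a₂)v₀, cosh(a₂−a₀)v₁, cosh(a₀−a₁)v₂) − [sinh(2(a₀−a₁))ℓ₂ + sinh(2(a₁−a₂))ℓ₀ + sinh(2(a₂−a₀))ℓ₁], where S₀(u,v,w) = Ω(u,v) + Ω(v,w) + Ω(w,u), is totally skew-symmetric in (x₀,x₁,x₂): it changes sign under any transposition of two of its arguments. -/
import Mathlib


/-- The Weyl product phase on `(V,Ω)`: `S₀(u,v,w) = Ω(u,v) + Ω(v,w) + Ω(w,u)`. -/
noncomputable def S0 {V : Type*} [AddCommGroup V] [Module ℝ V]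
    (Ω : V →ₗ[ℝ] V →ₗ[ℝ] ℝ) (u v w : V) : ℝ :=
  Ω u v + Ω v w + Ω w u

/-- The three-point phase function `S` on `M³`, `M = ℝ × V × ℝ`. -/
noncomputable def phase {V : Type*} [AddCommGroup V] [Module ℝ V]
    (Ω : V →ₗ[ℝ] V →ₗ[ℝ] ℝ) (x₀ x₁ x₂ : ℝ × V × ℝ) : ℝ :=
  S0 Ω (Real.cosh (x₁.1 - x₂.1) • x₀.2.1)
       (Real.cosh (x₂.1 - x₀.1) • x₁.2.1)
       (Real.cosh (x₀.1 - x₁.1) • x₂.2.1)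
    - (Real.sinh (2 * (x₀.1 - x₁.1)) * x₂.2.2
       + Real.sinh (2 * (x₁.1 - x₂.1)) * x₀.2.2
       + Real.sinh (2 * (x₂.1 - x₀.1)) * x₁.2.2)

private lemma cosh_sym (a b : ℝ) : Real.cosh (b - a) = Real.cosh (a - b) := by
  rw [← neg_sub, Real.cosh_neg]

private lemma sinh_odd (a b : ℝ) : Real.sinh (2 * (b - a)) = -Real.sinh (2 * (a - b)) := by
  rw [← Real.sinh_neg]; ring_nf

/-- the phase `S` is totally skew-symmetric in its three arguments. -/
theorem phase_totally_skew {V : Type*} [AddCommGroup V] [Module ℝ V]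
    (Ω : V →ₗ[ℝ] V →ₗ[ℝ] ℝ) (hΩ : ∀ v w : V, Ω v w = - Ω w v)
    (x₀ x₁ x₂ : ℝ × V × ℝ) :
    phase Ω x₁ x₀ x₂ = - phase Ω x₀ x₁ x₂ ∧
    phase Ω x₀ x₂ x₁ = - phase Ω x₀ x₁ x₂ ∧
    phase Ω x₂ x₁ x₀ = - phase Ω x₀ x₁ x₂ := by
  obtain ⟨a₀, v₀, l₀⟩ := x₀
  obtain ⟨a₁, v₁, l₁⟩ := x₁
  obtain ⟨a₂, v₂, l₂⟩ := x₂
  refine ⟨?_, ?_, ?_⟩ <;>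
    simp only [phase, S0, map_smul, LinearMap.smul_apply, smul_eq_mul,
      hΩ v₁ v₀, hΩ v₂ v₀, hΩ v₂ v₁, cosh_sym a₀ a₁, cosh_sym a₀ a₂, cosh_sym a₁ a₂,
      sinh_odd a₀ a₁, sinh_odd a₀ a₂, sinh_odd a₁ a₂] <;>
    ring
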